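/- Let C be a category and F : Cᵒᵖ × C ⥤ C a bifunctor. Assume: for every object X the endofunctor F(X, −) has a chosen initial algebra (W X, in_X), inducing a functor W : Cᵒᵖ ⥤ C; the endofunctor G : C ⥤ C, G X = F(W X, X), has a final coalgebra out : T' ⟶ F(W T', T'); write T = W T'. Assume additionally that for every object X the coalgebra (W X, in_X⁻¹) is a final coalgebra of F(X, −) (in_X is invertible by Lambek's lemma), and that the algebra (T', out⁻¹) is an initial algebra of G (out is invertible by the dual of Lambek's lemma). Then the quadruple (T', T, out⁻¹, in_{T'}⁻¹) is also an initial dialgebra for F. -/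

import Mathlib

open CategoryTheory

universe v u

variable {C : Type u} [Category.{v} C]

/-- The object part of a bifunctor `F : Cᵒᵖ × C ⥤ C`, contravariant in its
first and covariant in its second argument: `Fobj F B A = F(B, A)`. -/
def Fobj (F : Cᵒᵖ × C ⥤ C) (B A : C) : C :=
  F.obj (Opposite.op B, A)

/-- The morphism part of a bifunctor `F : Cᵒᵖ × C ⥤ C`: for `h' : B₁ ⟶ B₀`
and `h : A₀ ⟶ A₁`, `Fmap F h' h = F(h', h) : F(B₀, A₀) ⟶ F(B₁, A₁)`. -/
def Fmap (F : Cᵒᵖ × C ⥤ C) {B₀ B₁ A₀ A₁ : C} (h' : B₁ ⟶ B₀) (h : A₀ ⟶ A₁) :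
    Fobj F B₀ A₀ ⟶ Fobj F B₁ A₁ :=
  F.map (h'.op, h)

/-- A dialgebra for `F : Cᵒᵖ × C ⥤ C` : a quadruple `(A, B, f, g)` with
`f : F(B, A) ⟶ A` and `g : B ⟶ F(A, B)`. -/
structure Dialgebra (F : Cᵒᵖ × C ⥤ C) where
  A : C
  B : C
  f : Fobj F B A ⟶ A
  g : B ⟶ Fobj F A B

/-- `(h, h')` is a morphism of dialgebras from `D₀ = (A₀, B₀, f₀, g₀)` to
`D₁ = (A₁, B₁, f₁, g₁)` when `h ∘ f₀ = f₁ ∘ F(h', h)` and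
`F(h, h') ∘ g₁ = g₀ ∘ h'`. -/
def IsDialgebraHom (F : Cᵒᵖ × C ⥤ C) (D₀ D₁ : Dialgebra F)
    (h : D₀.A ⟶ D₁.A) (h' : D₁.B ⟶ D₀.B) : Prop :=
  D₀.f ≫ h = Fmap F h' h ≫ D₁.f ∧ D₁.g ≫ Fmap F h h' = h' ≫ D₀.g

/-- A dialgebra is initial when it admits exactly one dialgebra morphism to
every dialgebra for `F`. -/
def IsInitialDialgebra (F : Cᵒᵖ × C ⥤ C) (D : Dialgebra F) : Prop :=
  ∀ E : Dialgebra F, ∃! p : (D.A ⟶ E.A) × (E.B ⟶ D.B), IsDialgebraHom F D E p.1 p.2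

/-- `(WX, a)` is an initial algebra for the endofunctor `F(X, −)`. -/
def IsInitialAlgebraAt (F : Cᵒᵖ × C ⥤ C) (X WX : C) (a : Fobj F X WX ⟶ WX) : Prop :=
  ∀ (Y : C) (b : Fobj F X Y ⟶ Y), ∃! k : WX ⟶ Y, a ≫ k = Fmap F (𝟙 X) k ≫ b

lemma Fmap_comp (F : Cᵒᵖ × C ⥤ C) {B₀ B₁ B₂ A₀ A₁ A₂ : C}
    (a : B₁ ⟶ B₀) (b : B₂ ⟶ B₁) (c : A₀ ⟶ A₁) (d : A₁ ⟶ A₂) :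
    Fmap F (b ≫ a) (c ≫ d) = Fmap F a c ≫ Fmap F b d := by
  simp only [Fmap, op_comp, prod_comp, ← F.map_comp]
  exact F.map_comp (X := (Opposite.op B₀, A₀)) (Y := (Opposite.op B₁, A₁)) (Z := (Opposite.op B₂, A₂)) (a.op, c) (b.op, d)

lemma Fmap_id (F : Cᵒᵖ × C ⥤ C) {B A : C} :
    Fmap F (𝟙 B) (𝟙 A) = 𝟙 (Fobj F B A) := by
  simp only [Fmap, Fobj, op_id, prod_id_snd]
  exact F.map_id _

/-- Given chosen initial algebras `(W X, in_X)` of the endofunctors `F(X, −)`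
(inducing the functor `W : Cᵒᵖ ⥤ C` with action `Wmap` characterized by
`W f ∘ in_X = in_{X'} ∘ F(f, W f)`), and a final coalgebra
`out : T' ⟶ F(W T', T')` of the endofunctor `G = F(W −, −)`, write
`T = W T'`.  Assume additionally that for every `X` the coalgebra
`(W X, in_X⁻¹)` is a final coalgebra of `F(X, −)` and that the algebra
`(T', out⁻¹)` is an initial algebra of `G` (the structure maps being
invertible by Lambek's lemma and its dual).  Then the quadruple
`(T', T, out⁻¹, in_{T'}⁻¹)` is also an initial dialgebra for `F`. -/
theorem initial_dialgebra_swapped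
    {C : Type u} [Category.{v} C] (F : Cᵒᵖ × C ⥤ C)
    (W : C → C) (inn : ∀ X : C, Fobj F X (W X) ⟶ W X)
    (hinit : ∀ X : C, IsInitialAlgebraAt F X (W X) (inn X))
    (Wmap : ∀ ⦃X' X : C⦄, (X' ⟶ X) → (W X ⟶ W X'))
    (hWmap : ∀ {X' X : C} (f : X' ⟶ X), inn X ≫ Wmap f = Fmap F f (Wmap f) ≫ inn X')
    (T' : C) (out : T' ⟶ Fobj F (W T') T')
    (hfinal : ∀ (Y : C) (d : Y ⟶ Fobj F (W Y) Y),
      ∃! k : Y ⟶ T', k ≫ out = d ≫ Fmap F (Wmap k) k)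
    -- the inverses of the `in_X`, and finality of the coalgebras `(W X, in_X⁻¹)`
    (innInv : ∀ X : C, W X ⟶ Fobj F X (W X))
    (hinnInv₁ : ∀ X : C, inn X ≫ innInv X = 𝟙 (Fobj F X (W X)))
    (hinnInv₂ : ∀ X : C, innInv X ≫ inn X = 𝟙 (W X))
    (hinnFinal : ∀ (X Y : C) (d : Y ⟶ Fobj F X Y),
      ∃! k : Y ⟶ W X, k ≫ innInv X = d ≫ Fmap F (𝟙 X) k)
    -- the inverse of `out`, and initiality of the `G`-algebra `(T', out⁻¹)`
    (outInv : Fobj F (W T') T' ⟶ T')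
    (houtInv₁ : out ≫ outInv = 𝟙 T')
    (houtInv₂ : outInv ≫ out = 𝟙 (Fobj F (W T') T'))
    (houtInit : ∀ (Y : C) (b : Fobj F (W Y) Y ⟶ Y),
      ∃! k : T' ⟶ Y, outInv ≫ k = Fmap F (Wmap k) k ≫ b) :
    IsInitialDialgebra F ⟨T', W T', outInv, innInv T'⟩ := by

  intro E
  obtain ⟨σ, hσ, hσu⟩ := hinnFinal E.A E.B E.g
  obtain ⟨h, hh, hhu⟩ := houtInit E.A (Fmap F σ (𝟙 E.A) ≫ E.f)
  -- key computation
  have key : ∀ h₁ : T' ⟶ E.A,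
      (σ ≫ Wmap h₁) ≫ innInv T' = E.g ≫ Fmap F h₁ (σ ≫ Wmap h₁) := by
    intro h₁
    have e1 : Wmap h₁ ≫ innInv T' = innInv E.A ≫ Fmap F h₁ (Wmap h₁) := by
      have hw := hWmap h₁
      calc Wmap h₁ ≫ innInv T'
          = (innInv E.A ≫ inn E.A) ≫ Wmap h₁ ≫ innInv T' := by
            rw [hinnInv₂]; simp
        _ = innInv E.A ≫ (inn E.A ≫ Wmap h₁) ≫ innInv T' := by simp
        _ = innInv E.A ≫ (Fmap F h₁ (Wmap h₁) ≫ inn T') ≫ innInv T' := by rw [hw]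
        _ = innInv E.A ≫ Fmap F h₁ (Wmap h₁) ≫ (inn T' ≫ innInv T') := by simp
        _ = innInv E.A ≫ Fmap F h₁ (Wmap h₁) := by rw [hinnInv₁]; simp
    calc (σ ≫ Wmap h₁) ≫ innInv T'
        = σ ≫ Wmap h₁ ≫ innInv T' := by simp
      _ = σ ≫ innInv E.A ≫ Fmap F h₁ (Wmap h₁) := by rw [e1]
      _ = (σ ≫ innInv E.A) ≫ Fmap F h₁ (Wmap h₁) := by simp
      _ = (E.g ≫ Fmap F (𝟙 E.A) σ) ≫ Fmap F h₁ (Wmap h₁) := by rw [hσ]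
      _ = E.g ≫ Fmap F (𝟙 E.A) σ ≫ Fmap F h₁ (Wmap h₁) := by simp
      _ = E.g ≫ Fmap F h₁ (σ ≫ Wmap h₁) := by
            rw [← Fmap_comp]; simp
  refine ⟨⟨h, σ ≫ Wmap h⟩, ⟨?_, ?_⟩, ?_⟩
  · show outInv ≫ h = Fmap F (σ ≫ Wmap h) h ≫ E.f
    rw [hh]
    have e4 : Fmap F (σ ≫ Wmap h) h = Fmap F (Wmap h) h ≫ Fmap F σ (𝟙 E.A) := by
      rw [← Fmap_comp]; simp
    rw [e4]; simp
  · show E.g ≫ Fmap F h (σ ≫ Wmap h) = (σ ≫ Wmap h) ≫ innInv T'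
    exact (key h).symm
  · rintro ⟨h₁, h₁'⟩ ⟨c1, c2⟩
    dsimp at c1 c2 ⊢
    obtain ⟨k, hk, hku⟩ := hinnFinal T' E.B (E.g ≫ Fmap F h₁ (𝟙 E.B))
    have comp1 : ∀ m : E.B ⟶ W T',
        (E.g ≫ Fmap F h₁ (𝟙 E.B)) ≫ Fmap F (𝟙 T') m = E.g ≫ Fmap F h₁ m := by
      intro m
      rw [Category.assoc, ← Fmap_comp]; simp
    have hh₁' : h₁' = σ ≫ Wmap h₁ := by
      have e2 : h₁' = k := hku _ (by
        show h₁' ≫ innInv T' = (E.g ≫ Fmap F h₁ (𝟙 E.B)) ≫ Fmap F (𝟙 T') h₁'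
        rw [comp1]; exact c2.symm)
      have e3 : σ ≫ Wmap h₁ = k := hku _ (by
        show (σ ≫ Wmap h₁) ≫ innInv T' = (E.g ≫ Fmap F h₁ (𝟙 E.B)) ≫ Fmap F (𝟙 T') (σ ≫ Wmap h₁)
        rw [comp1]; exact key h₁)
      rw [e2, e3]
    have hh₁ : h₁ = h := by
      apply hhu
      rw [c1, hh₁']
      have e5 : Fmap F (σ ≫ Wmap h₁) h₁ = Fmap F (Wmap h₁) h₁ ≫ Fmap F σ (𝟙 E.A) := by
        rw [← Fmap_comp]; simp
      rw [e5]; simp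
    apply Prod.ext
    · exact hh₁
    · rw [hh₁', hh₁]
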